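/- For every n ≥ 1, the MABK operator M_n has exactly two nonzero entries: M_n f g = −Complex.I * 2^(n−1) when f is the constant-0 function and g is the constant-1 function, M_n f g = Complex.I * 2^(n−1) when f is the constant-1 function and g is the constant-0 function, and M_n f g = 0 for all other pairs (f, g). In particular M_n is a rank-2 matrix. -/

import Mathlib

open Matrix BigOperators

noncomputable section

/-- Pauli X matrix. -/
def pauliX : Matrix (Fin 2) (Fin 2) ℂ := !![0, 1; 1, 0]

/-- Pauli Y matrix. -/
def pauliY : Matrix (Fin 2) (Fin 2) ℂ := !![0, -Complex.I; Complex.I, 0]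

/-- n-fold tensor (Kronecker) product of a family of 2×2 matrices,
defined entrywise by `T(A) f g = ∏ j, (A j) (f j) (g j)`. -/
def tensor {n : ℕ} (A : Fin n → Matrix (Fin 2) (Fin 2) ℂ) :
    Matrix (Fin n → Fin 2) (Fin n → Fin 2) ℂ :=
  Matrix.of fun f g => ∏ j, A j (f j) (g j)

/-- The n-partite MABK operator
`M_n = (1/(2i)) (⊗ⱼ (X + iY) − ⊗ⱼ (X − iY))`. -/
def MABK (n : ℕ) : Matrix (Fin n → Fin 2) (Fin n → Fin 2) ℂ :=
  (1 / (2 * Complex.I)) •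
    (tensor (fun _ : Fin n => pauliX + Complex.I • pauliY)
      - tensor (fun _ : Fin n => pauliX - Complex.I • pauliY))

/-- The n-qubit GHZ state `(|0…0⟩ + i|1…1⟩)/√2`. -/
def GHZ (n : ℕ) : (Fin n → Fin 2) → ℂ :=
  fun f =>
    if f = fun _ => 0 then 1 / (Real.sqrt 2 : ℂ)
    else if f = fun _ => 1 then Complex.I / (Real.sqrt 2 : ℂ)
    else 0

/-- The phase-flipped n-qubit GHZ state `(|0…0⟩ − i|1…1⟩)/√2`. -/
def GHZ' (n : ℕ) : (Fin n → Fin 2) → ℂ :=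
  fun f =>
    if f = fun _ => 0 then 1 / (Real.sqrt 2 : ℂ)
    else if f = fun _ => 1 then -Complex.I / (Real.sqrt 2 : ℂ)
    else 0

/-!
`X + iY = 2 E₀₁` and `X - iY = 2 E₁₀` are multiples of matrix units, and a Kronecker product of
matrix units is again a matrix unit. Hence `M_n` is the sum of two matrix units sitting in distinct
rows and columns, with coefficients `∓i·2ⁿ/2`. Such a matrix has rank 2: its rows vanish outside two
indices, and it contains an invertible diagonal `2 × 2` submatrix.
-/

open Complex

theorem Matrix.rank_single_add_single {ι R : Type*} [Fintype ι] [DecidableEq ι] [CommRing R]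
    [IsDomain R] {a a' b b' : ι} (ha : a ≠ a') (hb : b ≠ b') {x y : R} (hx : x ≠ 0)
    (hy : y ≠ 0) : (single a b x + single a' b' y).rank = 2 := by
  set A := single a b x + single a' b' y
  apply le_antisymm
  · have hrows : Function.support A.row ⊆ ({a, a'} : Finset ι) := by
      intro i hi
      by_contra hi'
      simp only [Finset.coe_insert, Finset.coe_singleton, Set.mem_insert_iff,
        Set.mem_singleton_iff, not_or] at hi'
      exact hi (funext fun j => by simp [A, Ne.symm hi'.1, Ne.symm hi'.2])
    simpa [ha] using A.rank_le_card_of_support_subset _ hrows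
  · have hdiag : A.submatrix ![a, a'] ![b, b'] = diagonal ![x, y] := by
      ext i j
      fin_cases i <;> fin_cases j <;> simp [A, ha, hb, Ne.symm ha, Ne.symm hb]
    have hdet : (A.submatrix ![a, a'] ![b, b']).det ≠ 0 := by
      simp [hdiag, hx, hy]
    calc 2 = (A.submatrix ![a, a'] ![b, b']).rank := by rw [rank_of_det_ne_zero hdet, Fintype.card_fin]
      _ ≤ A.rank := A.rank_submatrix_le _ _

theorem pauliX_add_I_smul_pauliY : pauliX + I • pauliY = single 0 1 2 := by
  ext a b
  fin_cases a <;> fin_cases b <;> norm_num [pauliX, pauliY, single_apply]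

theorem pauliX_sub_I_smul_pauliY : pauliX - I • pauliY = single 1 0 2 := by
  ext a b
  fin_cases a <;> fin_cases b <;> norm_num [pauliX, pauliY, single_apply]

theorem tensor_single {n : ℕ} (a b : Fin n → Fin 2) (c : Fin n → ℂ) :
    tensor (fun j => single (a j) (b j) (c j)) = single a b (∏ j, c j) := by
  ext f g
  simp only [tensor, of_apply, single_apply, Fintype.prod_ite_zero, funext_iff, forall_and]

theorem MABK_eq_single_add_single {n : ℕ} (hn : 1 ≤ n) :
    MABK n = single (fun _ => 0) (fun _ => 1) (-I * 2 ^ (n - 1))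
      + single (fun _ => 1) (fun _ => 0) (I * 2 ^ (n - 1)) := by
  have hpow : (1 / (2 * I)) * 2 ^ n = -I * 2 ^ (n - 1) := by
    obtain ⟨m, rfl⟩ : ∃ m, n = m + 1 := ⟨n - 1, by omega⟩
    rw [Nat.add_sub_cancel, pow_succ, one_div, mul_inv, inv_I]
    ring
  rw [MABK, pauliX_add_I_smul_pauliY, pauliX_sub_I_smul_pauliY,
    tensor_single (fun _ => 0) (fun _ => 1), tensor_single (fun _ => 1) (fun _ => 0), smul_sub, smul_single, smul_single, Finset.prod_const, Finset.card_fin, smul_eq_mul, hpow,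
    sub_eq_add_neg, single_neg, neg_mul, neg_neg]

theorem const_zero_ne_const_one {n : ℕ} (hn : 1 ≤ n) :
    (fun _ : Fin n => (0 : Fin 2)) ≠ fun _ => 1 :=
  fun h => zero_ne_one (congrFun h ⟨0, hn⟩)

theorem mabk_entries (n : ℕ) (hn : 1 ≤ n) :
    MABK n (fun _ => 0) (fun _ => 1) = -Complex.I * 2 ^ (n - 1) ∧
    MABK n (fun _ => 1) (fun _ => 0) = Complex.I * 2 ^ (n - 1) ∧
    (∀ f g : Fin n → Fin 2,
      ¬(f = (fun _ => 0) ∧ g = (fun _ => 1)) →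
      ¬(f = (fun _ => 1) ∧ g = (fun _ => 0)) →
      MABK n f g = 0) ∧
    (MABK n).rank = 2 := by
  have hne := const_zero_ne_const_one hn
  rw [MABK_eq_single_add_single hn]
  refine ⟨by simp [hne], by simp [hne], ?_, ?_⟩
  · intro f g h01 h10
    simp [eq_comm, h01, h10]
  · exact rank_single_add_single hne hne.symm (by simp) (by simp)
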